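/- Let A be a left brace. Then A is a one-generator left brace of multipermutation level 2 if and only if A has a transitive cycle base X with |X| > 1 such that the cycle set (X, x·y := λ_x^{-1}(y)) is an indecomposable cycle set of multipermutation level 1 (equivalently, the restrictions λ_x|_X coincide for all x ∈ X). -/

import Mathlib

/-- A left brace structure on a type carrying an abelian additive group structure `+`
and a (multiplicative) group structure `∘` (written `*`). -/
class LeftBrace (A : Type*) [AddCommGroup A] [Group A] : Prop where
  compat : ∀ a b c : A, a * (b + c) + a = a * b + a * c

section Brace

variable {A : Type*} [AddCommGroup A] [Group A]

/-- The map `λ_a : b ↦ -a + a ∘ b`, as a permutation of `A`. -/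
def lam (a : A) : Equiv.Perm A where
  toFun b := -a + a * b
  invFun b := a⁻¹ * (a + b)
  left_inv b := by simp
  right_inv b := by simp

/-- A subset of a left brace is a sub-left-brace if it is simultaneously (the carrier of)
a subgroup of `(A,+)` and a subgroup of `(A,∘)`. -/
def IsSubBrace (B : Set A) : Prop :=
  ∃ (Sa : AddSubgroup A) (Sm : Subgroup A), (Sa : Set A) = B ∧ (Sm : Set A) = B

/-- `A(x)`: the smallest sub-left-brace containing `x`. -/
def braceClosure (x : A) : Set A := ⋂₀ {B : Set A | IsSubBrace B ∧ x ∈ B}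

end Brace

/-- The socle series of a left brace: `Soc_0 = {0}`,
`Soc_{n+1} = {a | ∀ b, a + b - a∘b ∈ Soc_n}`. -/
def socSeq (A : Type*) [AddCommGroup A] [Group A] : ℕ → Set A
  | 0 => {0}
  | n + 1 => {a | ∀ b, a + b - a * b ∈ socSeq A n}

/-- A left brace has multipermutation level `n` if `n` is minimal with `Soc_n(A) = A`. -/
def BraceMPL (A : Type*) [AddCommGroup A] [Group A] (n : ℕ) : Prop :=
  socSeq A n = Set.univ ∧ ∀ m < n, socSeq A m ≠ Set.univ

structure CycleSet (X : Type*) where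
  mul : X → X → X
  mul_bijective : ∀ x, Function.Bijective (mul x)
  cycloid : ∀ x y z, mul (mul x y) (mul x z) = mul (mul y x) (mul y z)
  nondeg : Function.Bijective (fun x => mul x x)

namespace CycleSet

variable {X : Type*}

/-- The left multiplication `σ_x` as a permutation of `X`. -/
noncomputable def sigma (C : CycleSet X) (x : X) : Equiv.Perm X :=
  Equiv.ofBijective (C.mul x) (C.mul_bijective x)

/-- The permutation group `𝒢(X)` of a cycle set. -/
noncomputable def G (C : CycleSet X) : Subgroup (Equiv.Perm X) :=
  Subgroup.closure (Set.range C.sigma)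

/-- A cycle set is indecomposable if `𝒢(X)` acts transitively on `X`. -/
def Indecomposable (C : CycleSet X) : Prop := ∀ x y : X, ∃ g ∈ C.G, g x = y

/-- A cycle set is uniconnected if `𝒢(X)` acts regularly on `X`. -/
def Uniconnected (C : CycleSet X) : Prop :=
  ∀ x y : X, ∃! g : Equiv.Perm X, g ∈ C.G ∧ g x = y

/-- `MPLrel C n a b` holds iff `a`, `b` have the same image in the `n`-th iterated
retraction `Ret^n(X)`. -/
def MPLrel (C : CycleSet X) : ℕ → X → X → Prop
  | 0 => Eq
  | n + 1 => fun a b => ∀ z, MPLrel C n (C.mul a z) (C.mul b z)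

/-- A cycle set has multipermutation level `n` if `n` is minimal with `|Ret^n(X)| = 1`. -/
def MPL (C : CycleSet X) (n : ℕ) : Prop :=
  (∀ a b, MPLrel C n a b) ∧ ∀ m < n, ∃ a b, ¬ MPLrel C m a b

end CycleSet

/-- `𝒜` is the system of blocks generated by a block `B` for the subgroup `G` of `Sym(Z)`. -/
def IsBlockSystem {Z : Type*} (G : Subgroup (Equiv.Perm Z)) (𝒜 : Set (Set Z)) : Prop :=
  ∃ B : Set Z, B.Nonempty ∧
    (∀ g ∈ G, (⇑g) '' B = B ∨ Disjoint ((⇑g) '' B) B) ∧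
    𝒜 = {A | ∃ g ∈ G, A = (⇑g) '' B}

/-- Two systems of blocks are orthogonal if any two members meet in exactly one point. -/
def OrthSystems {Z : Type*} (𝒜 ℬ : Set (Set Z)) : Prop :=
  ∀ A ∈ 𝒜, ∀ B ∈ ℬ, ∃ z, A ∩ B = {z}

/-- The system of blocks `𝓑_X = {{x} × S : x ∈ X}` on `X × S`. -/
def BXblocks (X S : Type*) : Set (Set (X × S)) :=
  {B | ∃ x : X, B = {p : X × S | p.1 = x}}

/-- The system of blocks `{X × {s} : s ∈ S}` on `X × S`. -/
def SBlocks (X S : Type*) : Set (Set (X × S)) :=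
  {B | ∃ s : S, B = {p : X × S | p.2 = s}}

/-- The system of blocks formed by the classes of the retract relation. -/
def RetBlocks {X : Type*} (C : CycleSet X) : Set (Set X) :=
  {B | ∃ x : X, B = {y : X | ∀ z, C.mul y z = C.mul x z}}

/-!
If `Soc₂(A) = A`, then `λ` is additive and `λ_{λ_a(b)} = λ_b`; on the `λ`-orbit `X` of `e` this says
exactly that `λ` is constant on `X`, i.e. that all `σ_x` of the cycle set `X` coincide. Conversely,
if `λ` is constant on an orbit `X` generating `(A,+)`, then `λ_{a+x} = λ_a λ_x` for `x ∈ X`, so `λ`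
is additive and `λ_{λ_a(b)} = λ_b` follows from the case `b ∈ X`. The restriction of every `λ_a`
to `X` lies in `𝒢(X)`, which is therefore transitive on the orbit.

The additive span of an orbit is a left ideal, hence a sub-brace, so it is all of `A` when `e`
generates `A`. Conversely a sub-brace containing `e` is stable under `σ_e`, which (all `σ_x` being
equal) generates the transitive group `𝒢(X)`; so it contains `X` and is all of `A`. Finally
`Soc₁(A) = A` means that `λ` is trivial, i.e. that the orbit is a single point.
-/

section Lam

variable {A : Type*} [AddCommGroup A] [Group A]

theorem lam_apply (a b : A) : lam a b = -a + a * b := rfl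

theorem mul_eq_add_lam (a b : A) : a * b = a + lam a b := by
  rw [lam_apply]; abel

theorem mem_socSeq_one_iff {a : A} : a ∈ socSeq A 1 ↔ lam a = 1 := by
  simp only [socSeq, Set.mem_ofPred_eq, Set.mem_singleton_iff, Equiv.ext_iff,
    Equiv.Perm.one_apply, mul_eq_add_lam]
  refine forall_congr' fun b => ?_
  rw [show a + b - (a + lam a b) = b - lam a b by abel, sub_eq_zero, eq_comm]

theorem socSeq_one_eq_univ_iff : socSeq A 1 = Set.univ ↔ ∀ a : A, lam a = 1 := by
  simp only [Set.eq_univ_iff_forall, mem_socSeq_one_iff]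

theorem mem_socSeq_two_iff {a : A} : a ∈ socSeq A 2 ↔ ∀ b, lam (b - lam a b) = 1 := by
  refine forall_congr' fun b => ?_
  rw [mul_eq_add_lam, show a + b - (a + lam a b) = b - lam a b by abel, mem_socSeq_one_iff]

theorem braceMPL_two_iff :
    BraceMPL A 2 ↔ socSeq A 2 = Set.univ ∧ socSeq A 1 ≠ Set.univ := by
  refine ⟨fun ⟨h2, hlt⟩ => ⟨h2, hlt 1 one_lt_two⟩, fun ⟨h2, h1⟩ => ⟨h2, fun m hm => ?_⟩⟩
  interval_cases m
  · exact fun h0 => h1 (Set.eq_univ_of_forall fun a b => h0 ▸ Set.mem_univ _)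
  · exact h1

theorem braceClosure_eq_univ_iff {x : A} :
    braceClosure x = Set.univ ↔ ∀ B : Set A, IsSubBrace B → x ∈ B → B = Set.univ :=
  Set.sInter_eq_univ.trans ⟨fun h B hB hx => h B ⟨hB, hx⟩, fun h _ ⟨hB, hx⟩ => h _ hB hx⟩

theorem IsSubBrace.lam_mem {B : Set A} (hB : IsSubBrace B) {a b : A} (ha : a ∈ B)
    (hb : b ∈ B) : lam a b ∈ B := by
  obtain ⟨Sa, Sm, hSa, hSm⟩ := hB
  have hmul : a * b ∈ B := by
    rw [← hSm] at ha hb ⊢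
    exact mul_mem ha hb
  rw [← hSa] at ha hmul ⊢
  exact add_mem (neg_mem ha) hmul

theorem IsSubBrace.inv_mem {B : Set A} (hB : IsSubBrace B) {a : A} (ha : a ∈ B) : a⁻¹ ∈ B := by
  obtain ⟨Sa, Sm, -, rfl⟩ := hB
  exact Subgroup.inv_mem Sm ha

theorem IsSubBrace.eq_univ_of_subset {B X : Set A} (hB : IsSubBrace B)
    (hX : AddSubgroup.closure X = ⊤) (hXB : X ⊆ B) : B = Set.univ := by
  obtain ⟨Sa, -, rfl, -⟩ := hB
  rw [AddSubgroup.coe_eq_univ, eq_top_iff, ← hX, AddSubgroup.closure_le]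
  exact hXB

end Lam

namespace CycleSet

variable {X : Type*}

theorem mpl_one_iff (C : CycleSet X) :
    C.MPL 1 ↔ (∀ x y : X, C.mul x = C.mul y) ∧ Nontrivial X := by
  simp [MPL, MPLrel, funext_iff, nontrivial_iff]

open Pointwise in
theorem Indecomposable.eq_univ {C : CycleSet X} (hC : C.Indecomposable) {S : Set X}
    (hS : ∀ x z, C.mul x z ∈ S ↔ z ∈ S) (hne : S.Nonempty) : S = Set.univ := by
  have hG : C.G ≤ MulAction.stabilizer (Equiv.Perm X) S := by
    refine (Subgroup.closure_le _).mpr ?_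
    rintro _ ⟨x, rfl⟩
    refine MulAction.mem_stabilizer_iff.mpr (Set.ext fun z => ?_)
    rw [Set.mem_smul_set_iff_inv_smul_mem, ← hS x, Equiv.Perm.smul_def]
    show C.sigma x ((C.sigma x).symm z) ∈ S ↔ _
    rw [Equiv.apply_symm_apply]
  obtain ⟨z₀, hz₀⟩ := hne
  refine Set.eq_univ_of_forall fun y => ?_
  obtain ⟨g, hg, rfl⟩ := hC z₀ y
  rw [← MulAction.mem_stabilizer_iff.mp (hG hg)]
  exact Set.smul_mem_smul_set hz₀

end CycleSet

section LeftBrace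

variable {A : Type*} [AddCommGroup A] [Group A] [LeftBrace A]

namespace LeftBrace

theorem mul_add_eq (a b c : A) : a * (b + c) = a * b + a * c - a :=
  eq_sub_of_add_eq (compat a b c)

theorem mul_zero_eq (a : A) : a * 0 = a := by
  simpa using (compat a 0 0).symm

theorem one_eq_zero : (1 : A) = 0 := by
  simpa using (mul_zero_eq (1 : A)).symm

theorem mul_neg_eq (a b : A) : a * -b = a + a - a * b := by
  have h := compat a b (-b)
  rw [add_neg_cancel, mul_zero_eq] at h
  rw [h]; abel

end LeftBrace

open LeftBrace

theorem lam_add_apply (a b c : A) : lam a (b + c) = lam a b + lam a c := by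
  simp only [lam_apply, mul_add_eq]; abel

def lamAddEquiv (a : A) : A ≃+ A :=
  { lam a with map_add' := lam_add_apply a }

theorem lam_zero_apply (a : A) : lam a 0 = 0 :=
  map_zero (lamAddEquiv a)

theorem lam_neg_apply (a b : A) : lam a (-b) = -lam a b :=
  map_neg (lamAddEquiv a) b

theorem lam_mul (a b : A) : lam (a * b) = lam a * lam b := by
  ext c
  simp only [Equiv.Perm.mul_apply, lam_apply, mul_add_eq, mul_neg_eq, mul_assoc]
  abel

theorem lam_one : lam (1 : A) = 1 :=
  (MonoidHom.mk' lam lam_mul).map_one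

theorem lam_zero : lam (0 : A) = 1 := by
  rw [← one_eq_zero, lam_one]

theorem lam_inv (a : A) : lam a⁻¹ = (lam a)⁻¹ :=
  (MonoidHom.mk' lam lam_mul).map_inv a

theorem lam_symm (a : A) : (lam a).symm = lam a⁻¹ := by
  rw [lam_inv]; rfl

theorem IsSubBrace.lam_symm_mem_iff {B : Set A} (hB : IsSubBrace B) {a b : A} (ha : a ∈ B) :
    (lam a).symm b ∈ B ↔ b ∈ B :=
  ⟨fun h => by simpa using hB.lam_mem ha h, fun h => lam_symm a ▸ hB.lam_mem (hB.inv_mem ha) h⟩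

theorem lam_add (a b : A) : lam (a + b) = lam a * lam ((lam a).symm b) := by
  rw [← lam_mul, mul_eq_add_lam, Equiv.apply_symm_apply]

theorem lam_symm_apply_self (a : A) : (lam a).symm a = -a⁻¹ := by
  rw [lam_symm, lam_apply, inv_mul_cancel, one_eq_zero, add_zero]

theorem lam_symm_lam_symm (a b c : A) :
    (lam ((lam a).symm b)).symm ((lam a).symm c) = (lam (a + b)).symm c := by
  rw [lam_add, Equiv.Perm.mul_def, Equiv.symm_trans_apply]

theorem lam_add_of_lam_lam (h : ∀ a b : A, lam (lam a b) = lam b) (a b : A) :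
    lam (a + b) = lam a * lam b := by
  rw [lam_add, lam_symm, h]

theorem socSeq_two_eq_univ_iff :
    socSeq A 2 = Set.univ ↔ ∀ a b : A, lam (lam a b) = lam b := by
  simp only [Set.eq_univ_iff_forall, mem_socSeq_two_iff]
  constructor
  · intro h a b
    have hb := lam_add (b - lam a b) (lam a b)
    rwa [sub_add_cancel, h a b, one_mul, ← Equiv.Perm.inv_def, inv_one, Equiv.Perm.one_apply,
      eq_comm] at hb
  · intro h a b
    have hb := lam_add_of_lam_lam h (b - lam a b) (lam a b)
    rw [sub_add_cancel, h] at hb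
    exact mul_eq_right.mp hb.symm

theorem lam_eq_of_eqOn {X : Set A} (hX : AddSubgroup.closure X = ⊤) {a b : A}
    (h : Set.EqOn (lam a) (lam b) X) : lam a = lam b :=
  Equiv.ext fun c => DFunLike.congr_fun (AddMonoidHom.eq_of_eqOn_dense hX
    (f := (lamAddEquiv a).toAddMonoidHom) (g := (lamAddEquiv b).toAddMonoidHom) h) c

theorem lam_add_of_forall_mem {X : Set A} (hX : AddSubgroup.closure X = ⊤)
    (h : ∀ a, ∀ x ∈ X, lam (a + x) = lam a * lam x) (a b : A) :
    lam (a + b) = lam a * lam b := by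
  have hb : b ∈ AddSubgroup.closure X := hX ▸ AddSubgroup.mem_top b
  induction hb using AddSubgroup.closure_induction_right generalizing a with
  | zero => rw [add_zero, lam_zero, mul_one]
  | add_right b _ x hx ih => rw [← add_assoc, h _ x hx, ih, h b x hx, mul_assoc]
  | add_neg_cancel b _ x hx ih =>
    have hsub : ∀ c, lam (c + -x) = lam c * (lam x)⁻¹ := fun c =>
      eq_mul_inv_of_mul_eq (by rw [← h _ x hx, neg_add_cancel_right])
    rw [← add_assoc, hsub, hsub, ih, mul_assoc]

theorem lam_lam_of_forall_mem {X : Set A} (hX : AddSubgroup.closure X = ⊤)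
    (h : ∀ a, ∀ x ∈ X, lam (lam a x) = lam x) (a b : A) : lam (lam a b) = lam b := by
  have hadd : ∀ a b : A, lam (a + b) = lam a * lam b :=
    lam_add_of_forall_mem hX fun a x hx => by rw [lam_add, lam_symm, h a⁻¹ x hx]
  have hneg : ∀ c : A, lam (-c) = (lam c)⁻¹ := fun c =>
    eq_inv_of_mul_eq_one_left (by rw [← hadd, neg_add_cancel, lam_zero])
  have hb : b ∈ AddSubgroup.closure X := hX ▸ AddSubgroup.mem_top b
  induction hb using AddSubgroup.closure_induction with
  | mem x hx => exact h a x hx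
  | zero => rw [lam_zero_apply]
  | add x y _ _ hx hy => rw [lam_add_apply, hadd, hadd, hx, hy]
  | neg x _ hx => rw [lam_neg_apply, hneg, hneg, hx]

def IsLamInvariant (X : Set A) : Prop :=
  ∀ a, ∀ x ∈ X, lam a x ∈ X

theorem mem_range_lam_self (e : A) : e ∈ Set.range fun a : A => lam a e :=
  ⟨1, show lam 1 e = e by rw [lam_one]; rfl⟩

theorem isLamInvariant_range_lam (e : A) : IsLamInvariant (Set.range fun b : A => lam b e) := by
  rintro a _ ⟨b, rfl⟩
  exact ⟨a * b, by simp only [lam_mul, Equiv.Perm.mul_apply]⟩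

theorem lam_lam_iff_of_closure_range {e : A}
    (hX : AddSubgroup.closure (Set.range fun a : A => lam a e) = ⊤) :
    (∀ a b : A, lam (lam a b) = lam b) ↔ ∀ a : A, lam (lam a e) = lam e := by
  refine ⟨fun h a => h a e, fun h => lam_lam_of_forall_mem hX ?_⟩
  rintro a _ ⟨b, rfl⟩
  rw [← Equiv.Perm.mul_apply, ← lam_mul, h, h]

theorem socSeq_one_ne_univ_iff {e : A}
    (hX : AddSubgroup.closure (Set.range fun a : A => lam a e) = ⊤) :
    socSeq A 1 ≠ Set.univ ↔ (Set.range fun a : A => lam a e).Nontrivial := by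
  rw [Ne, socSeq_one_eq_univ_iff, ← Set.not_subsingleton_iff, not_iff_not]
  constructor
  · rintro h _ ⟨a, rfl⟩ _ ⟨b, rfl⟩
    simp [h]
  · intro hs a
    rw [← lam_one]
    refine lam_eq_of_eqOn hX ?_
    rintro _ ⟨b, rfl⟩
    exact hs (isLamInvariant_range_lam e a _ ⟨b, rfl⟩) (isLamInvariant_range_lam e 1 _ ⟨b, rfl⟩)

theorem IsLamInvariant.isSubBrace_coe {S : AddSubgroup A} (hS : IsLamInvariant (S : Set A)) :
    IsSubBrace (S : Set A) := by
  refine ⟨S, ⟨⟨⟨S, fun {a b} ha hb => ?_⟩, ?_⟩, fun {a} ha => ?_⟩, rfl, rfl⟩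
  · rw [mul_eq_add_lam]
    exact add_mem ha (hS a b hb)
  · show (1 : A) ∈ S
    rw [one_eq_zero]
    exact zero_mem S
  · rw [← neg_neg a⁻¹, ← lam_symm_apply_self, lam_symm]
    exact neg_mem (hS a⁻¹ a ha)

namespace IsLamInvariant

variable {X : Set A} (hX : IsLamInvariant X)
include hX

theorem closure : IsLamInvariant (AddSubgroup.closure X : Set A) := by
  intro a b hb
  have hmap : lam a b ∈ (AddSubgroup.closure X).map (lamAddEquiv a).toAddMonoidHom := ⟨b, hb, rfl⟩
  rw [AddMonoidHom.map_closure] at hmap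
  exact AddSubgroup.closure_mono (Set.image_subset_iff.mpr (hX a)) hmap

theorem lam_symm_mem (a : A) {x : A} (hx : x ∈ X) : (lam a).symm x ∈ X :=
  lam_symm a ▸ hX a⁻¹ x hx

def cycleSet : CycleSet X where
  mul x y := ⟨(lam (x : A)).symm y, hX.lam_symm_mem x y.2⟩
  mul_bijective x :=
    ⟨fun y z h => Subtype.ext ((lam (x : A)).symm.injective (congrArg Subtype.val h)),
      fun z => ⟨⟨lam (x : A) z, hX x z z.2⟩, Subtype.ext ((lam (x : A)).symm_apply_apply z)⟩⟩
  cycloid x y z := Subtype.ext (by simp only [lam_symm_lam_symm, add_comm])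
  nondeg := by
    refine ⟨fun x y h => ?_, fun y => ?_⟩
    · have h' := congrArg Subtype.val h
      simp only [lam_symm_apply_self, neg_inj, inv_inj] at h'
      exact Subtype.ext h'
    · have hy : (lam (-(y : A))⁻¹).symm (-(y : A))⁻¹ = y := by
        rw [lam_symm_apply_self, inv_inv, neg_neg]
      have hx := hX (-(y : A))⁻¹ y y.2
      rw [← (Equiv.symm_apply_eq _).mp hy] at hx
      exact ⟨⟨_, hx⟩, Subtype.ext hy⟩

theorem cycleSet_sigma_inv_apply (y z : X) : ((hX.cycleSet.sigma y)⁻¹ z : A) = lam (y : A) z :=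
  (lam (y : A)).symm_apply_eq.mp (congrArg Subtype.val ((hX.cycleSet.sigma y).apply_symm_apply z))

theorem exists_mem_G_coe_apply (hcl : AddSubgroup.closure X = ⊤) (a : A) :
    ∃ g ∈ hX.cycleSet.G, ∀ z : X, (g z : A) = lam a z := by
  have hσ : ∀ y : X, hX.cycleSet.sigma y ∈ hX.cycleSet.G := fun y =>
    Subgroup.subset_closure ⟨y, rfl⟩
  have ha : a ∈ AddSubgroup.closure X := hcl ▸ AddSubgroup.mem_top a
  -- `λ_{a+x} = λ_a λ_y` with `y = λ_a⁻¹(x) ∈ X`, and `λ_y` restricts to `σ_y⁻¹`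
  induction ha using AddSubgroup.closure_induction_right with
  | zero => exact ⟨1, one_mem _, fun z => by rw [lam_zero]; rfl⟩
  | add_right a _ x hx ih =>
    obtain ⟨g, hg, hga⟩ := ih
    let y : X := ⟨(lam a).symm x, hX.lam_symm_mem a hx⟩
    refine ⟨g * (hX.cycleSet.sigma y)⁻¹, mul_mem hg (inv_mem (hσ y)), fun z => ?_⟩
    rw [lam_add, Equiv.Perm.mul_apply, hga, cycleSet_sigma_inv_apply, Equiv.Perm.mul_apply]
  | add_neg_cancel a _ x hx ih =>
    obtain ⟨g, hg, hga⟩ := ih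
    let y : X := ⟨(lam (a + -x)).symm x, hX.lam_symm_mem _ hx⟩
    refine ⟨g * hX.cycleSet.sigma y, mul_mem hg (hσ y), fun z => ?_⟩
    have hsplit := lam_add (a + -x) x
    rw [neg_add_cancel_right] at hsplit
    rw [eq_mul_inv_of_mul_eq hsplit.symm, Equiv.Perm.mul_apply, Equiv.Perm.mul_apply, hga]
    rfl

end IsLamInvariant

theorem indecomposable_cycleSet_range_lam {e : A}
    (hcl : AddSubgroup.closure (Set.range fun a : A => lam a e) = ⊤) :
    (isLamInvariant_range_lam e).cycleSet.Indecomposable := by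
  rintro ⟨_, a, rfl⟩ ⟨_, b, rfl⟩
  obtain ⟨g, hg, hga⟩ := (isLamInvariant_range_lam e).exists_mem_G_coe_apply hcl a
  obtain ⟨k, hk, hkb⟩ := (isLamInvariant_range_lam e).exists_mem_G_coe_apply hcl b
  have hg_e : g ⟨e, mem_range_lam_self e⟩ = ⟨lam a e, a, rfl⟩ := Subtype.ext (hga _)
  refine ⟨k * g⁻¹, mul_mem hk (inv_mem hg), Subtype.ext ?_⟩
  rw [Equiv.Perm.mul_apply, ← hg_e, ← Equiv.Perm.mul_apply g⁻¹, inv_mul_cancel,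
    Equiv.Perm.one_apply, hkb]

theorem closure_range_lam_eq_top {e : A} (he : braceClosure e = Set.univ) :
    AddSubgroup.closure (Set.range fun a : A => lam a e) = ⊤ := by
  rw [← AddSubgroup.coe_eq_univ]
  exact braceClosure_eq_univ_iff.mp he _ (isLamInvariant_range_lam e).closure.isSubBrace_coe
    (AddSubgroup.subset_closure (mem_range_lam_self e))

theorem lam_eq_of_cycleSet_mul_eq {X : Set A} (hcl : AddSubgroup.closure X = ⊤) (C : CycleSet X)
    (hC : ∀ x y : X, ((C.mul x y : X) : A) = (lam (x : A)).symm y) {x y : X}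
    (h : C.mul x = C.mul y) : lam (x : A) = lam (y : A) := by
  have hinv : lam (x : A)⁻¹ = lam (y : A)⁻¹ := lam_eq_of_eqOn hcl fun z hz => by
    simpa only [hC, lam_symm] using congrArg Subtype.val (congrFun h ⟨z, hz⟩)
  rwa [lam_inv, lam_inv, inv_inj] at hinv

theorem subset_of_isSubBrace {X : Set A} {C : CycleSet X}
    (hC : ∀ x y : X, ((C.mul x y : X) : A) = (lam (x : A)).symm y) (hind : C.Indecomposable)
    (hmul : ∀ x y, C.mul x = C.mul y) {e : A} (he : e ∈ X) {B : Set A} (hB : IsSubBrace B)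
    (heB : e ∈ B) : X ⊆ B := by
  have hS := hind.eq_univ (S := {z | (z : A) ∈ B}) (fun x z => ?_) ⟨⟨e, he⟩, heB⟩
  · exact fun y hy => (hS ▸ Set.mem_univ (⟨y, hy⟩ : X) :)
  · show ((C.mul x z : X) : A) ∈ B ↔ (z : A) ∈ B
    rw [hmul x ⟨e, he⟩, hC]
    exact hB.lam_symm_mem_iff heB

end LeftBrace

/-- A left brace `A` is a one-generator left brace of multipermutation
level 2 iff it has a transitive cycle base `X` with `|X| > 1` such that the cycle set
`(X, x·y := λ_x^{-1}(y))` is indecomposable of multipermutation level 1. -/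
theorem stmt17 {A : Type} [AddCommGroup A] [Group A] [LeftBrace A] :
    ((∃ x : A, braceClosure x = Set.univ) ∧ BraceMPL A 2) ↔
      ∃ X : Set A,
        (∃ e ∈ X, X = Set.range fun a : A => lam a e) ∧
        AddSubgroup.closure X = ⊤ ∧
        X.Nontrivial ∧
        ∃ C : CycleSet ↥X,
          (∀ x y : ↥X, ((C.mul x y : ↥X) : A) = (lam (x : A)).symm (y : A)) ∧
          C.Indecomposable ∧ C.MPL 1 := by
  constructor
  · rintro ⟨⟨e, he⟩, hmpl⟩
    obtain ⟨h2, h1⟩ := braceMPL_two_iff.mp hmpl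
    have hcl := closure_range_lam_eq_top he
    have hconst := (lam_lam_iff_of_closure_range hcl).mp (socSeq_two_eq_univ_iff.mp h2)
    have hnt := (socSeq_one_ne_univ_iff hcl).mp h1
    refine ⟨_, ⟨e, mem_range_lam_self e, rfl⟩, hcl, hnt, (isLamInvariant_range_lam e).cycleSet,
      fun _ _ => rfl, indecomposable_cycleSet_range_lam hcl,
      (CycleSet.mpl_one_iff _).mpr ⟨?_, hnt.coe_sort⟩⟩
    rintro ⟨_, a, rfl⟩ ⟨_, b, rfl⟩
    funext z
    exact Subtype.ext (show (lam (lam a e)).symm z = (lam (lam b e)).symm z by rw [hconst, hconst])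
  · rintro ⟨X, ⟨e, he, rfl⟩, hcl, hnt, C, hC, hind, hmpl⟩
    obtain ⟨hmul, -⟩ := (CycleSet.mpl_one_iff C).mp hmpl
    have hconst : ∀ a, lam (lam a e) = lam e := fun a =>
      lam_eq_of_cycleSet_mul_eq hcl C hC (hmul ⟨_, a, rfl⟩ ⟨e, he⟩)
    refine ⟨⟨e, braceClosure_eq_univ_iff.mpr fun B hB heB => hB.eq_univ_of_subset hcl
        (subset_of_isSubBrace hC hind hmul he hB heB)⟩,
      braceMPL_two_iff.mpr ⟨?_, (socSeq_one_ne_univ_iff hcl).mpr hnt⟩⟩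
    exact socSeq_two_eq_univ_iff.mpr ((lam_lam_iff_of_closure_range hcl).mpr hconst)
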